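/- Let q ≥ 0 and t > 0. For every φ ∈ L¹(ℝ), the function U_q(t)φ satisfies the dispersive estimate ‖U_q(t)φ‖_{L^∞} ≤ √(2/π) · t^{−1/2} · ‖φ‖_{L¹}. -/

import Mathlib

open Complex MeasureTheory Real

/-- The operator `𝓛₊[φ](x) = φ(x) − q·1₋(x) e^{qx} ∫_x^{−x} e^{q|y|} φ(y) dy`. -/
noncomputable def Lplus (q : ℝ) (φ : ℝ → ℂ) (x : ℝ) : ℂ :=
  φ x - (if x < 0 then (1 : ℂ) else 0) * q * Real.exp (q * x) *
    ∫ y in x..(-x), (Real.exp (q * |y|) : ℂ) * φ y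

/-- The operator `𝓛₋[φ](x) = φ(x) − q·1₊(x) e^{−qx} ∫_{−x}^{x} e^{q|y|} φ(y) dy`. -/
noncomputable def Lminus (q : ℝ) (φ : ℝ → ℂ) (x : ℝ) : ℂ :=
  φ x - (if 0 ≤ x then (1 : ℂ) else 0) * q * Real.exp (-(q * x)) *
    ∫ y in (-x)..x, (Real.exp (q * |y|) : ℂ) * φ y

/-- The propagator `U_q(t)` of the Schrödinger equation with repulsive delta
potential, given by the explicit formula
`(U_q(t)φ)(x) = (e^{−iπ/4}/√(2π)) t^{−1/2} ∫ e^{i(x−y)²/(2t)} 𝓛₊[φ](y) dy` for `x ≥ 0`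
and the same expression with `𝓛₋` for `x < 0`. -/
noncomputable def Uq (q t : ℝ) (φ : ℝ → ℂ) (x : ℝ) : ℂ :=
  Complex.exp (-(I * π / 4)) / (Real.sqrt (2 * π) : ℂ) * ((Real.sqrt t : ℝ) : ℂ)⁻¹ *
    (if 0 ≤ x then ∫ y : ℝ, Complex.exp (I * ((x : ℂ) - y) ^ 2 / (2 * t)) * Lplus q φ y
     else ∫ y : ℝ, Complex.exp (I * ((x : ℂ) - y) ^ 2 / (2 * t)) * Lminus q φ y)

/-!
The kernel `e^{i(x−y)²/(2t)}` has modulus one, so `|U_q(t)φ(x)| ≤ (2πt)^{-1/2} ‖𝓛_±[φ]‖_{L¹}`,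
and `2 / √(2π) = √(2/π)` reduces the claim to `‖𝓛_±[φ]‖_{L¹} ≤ 2 ‖φ‖_{L¹}`. Since `𝓛₋` is `𝓛₊`
conjugated by the reflection `y ↦ −y`, only `𝓛₊` needs work. For `y < 0` its correction term is
at most `q e^{qy} ∫_y^{−y} e^{q|z|} |φ(z)| dz`, and by Tonelli the integral of this majorant is at
most `∫ e^{q|z|} |φ(z)| (∫_{−∞}^{−|z|} q e^{qy} dy) dz = ‖φ‖_{L¹}`.
Working with lower Lebesgue integrals avoids proving that `𝓛₊[φ]` is measurable or integrable.
-/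

open Set
open scoped ENNReal

lemma Complex.enorm_ofReal_of_nonneg {r : ℝ} (hr : 0 ≤ r) : ‖(r : ℂ)‖ₑ = ENNReal.ofReal r := by
  rw [← ofReal_norm, Complex.norm_real, Real.norm_of_nonneg hr]

lemma Real.sqrt_two_div_pi_eq : √(2 / π) = 2 * (√(2 * π))⁻¹ := by
  rw [show 2 / π = 2 ^ 2 / (2 * π) by field_simp, Real.sqrt_div' _ (by positivity),
    Real.sqrt_sq zero_le_two, div_eq_mul_inv]

lemma lintegral_ofReal_mul_exp_mul_Iic {q : ℝ} (hq : 0 < q) (c : ℝ) :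
    ∫⁻ y in Iic c, ENNReal.ofReal (q * Real.exp (q * y)) = ENNReal.ofReal (Real.exp (q * c)) := by
  rw [← ofReal_integral_eq_lintegral_ofReal ((integrableOn_exp_mul_Iic hq c).const_mul q)
    (ae_of_all _ fun y => by positivity), integral_const_mul, integral_exp_mul_Iic hq,
    mul_div_cancel₀ _ hq.ne']

lemma integral_norm_le_of_lintegral_enorm_le {α E F : Type*} [MeasurableSpace α] {μ : Measure α}
    [NormedAddCommGroup E] [NormedAddCommGroup F] {f : α → E} {g : α → F} {c : ℝ} (hc : 0 ≤ c)
    (hg : Integrable g μ) (h : ∫⁻ a, ‖f a‖ₑ ∂μ ≤ ENNReal.ofReal c * ∫⁻ a, ‖g a‖ₑ ∂μ) :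
    ∫ a, ‖f a‖ ∂μ ≤ c * ∫ a, ‖g a‖ ∂μ := by
  by_cases hf : AEStronglyMeasurable (fun a => ‖f a‖) μ
  · rw [integral_eq_lintegral_of_nonneg_ae (ae_of_all _ fun _ => norm_nonneg _) hf,
      integral_norm_eq_lintegral_enorm hg.1, ← ENNReal.toReal_ofReal hc, ← ENNReal.toReal_mul]
    simp_rw [ofReal_norm]
    exact ENNReal.toReal_mono (ENNReal.mul_ne_top ENNReal.ofReal_ne_top hg.2.ne) h
  · rw [integral_non_aestronglyMeasurable hf]
    exact mul_nonneg hc (integral_nonneg fun _ => norm_nonneg _)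

lemma norm_integral_cexp_phase_mul_le (x t : ℝ) (L : ℝ → ℂ) :
    ‖∫ y : ℝ, Complex.exp (I * ((x : ℂ) - y) ^ 2 / (2 * t)) * L y‖ ≤ ∫ y : ℝ, ‖L y‖ := by
  refine (norm_integral_le_integral_norm _).trans_eq (integral_congr_ae (ae_of_all _ fun y => ?_))
  have hphase : I * ((x : ℂ) - y) ^ 2 / (2 * t) = (((x - y) ^ 2 / (2 * t) : ℝ) : ℂ) * I := by
    push_cast; ring
  simp only [norm_mul, hphase, Complex.norm_exp_ofReal_mul_I, one_mul]

-- No indicator of `y < 0` is needed: `Ioc y (-y)` is empty for `y ≥ 0`.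
noncomputable def lplusCorrectionMajorant (q : ℝ) (g : ℝ → ℝ≥0∞) (y : ℝ) : ℝ≥0∞ :=
  ENNReal.ofReal (q * Real.exp (q * y)) *
    ∫⁻ z in Ioc y (-y), ENNReal.ofReal (Real.exp (q * |z|)) * g z

lemma enorm_Lplus_le {q : ℝ} (hq : 0 ≤ q) (φ : ℝ → ℂ) (y : ℝ) :
    ‖Lplus q φ y‖ₑ ≤ ‖φ y‖ₑ + lplusCorrectionMajorant q (fun z => ‖φ z‖ₑ) y := by
  unfold Lplus
  by_cases hy : y < 0
  · refine enorm_sub_le.trans (add_le_add_right ?_ _)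
    rw [if_pos hy, one_mul, intervalIntegral.integral_of_le (by linarith), enorm_mul, enorm_mul,
      Complex.enorm_ofReal_of_nonneg hq, Complex.enorm_ofReal_of_nonneg (Real.exp_pos _).le,
      ← ENNReal.ofReal_mul hq, lplusCorrectionMajorant]
    gcongr
    refine (enorm_integral_le_lintegral_enorm _).trans_eq (lintegral_congr fun z => ?_)
    rw [enorm_mul, Complex.enorm_ofReal_of_nonneg (Real.exp_pos _).le]
  · simp [hy]

lemma lintegral_lplusCorrectionMajorant_le {q : ℝ} (hq : 0 ≤ q) {g : ℝ → ℝ≥0∞}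
    (hg : AEMeasurable g) :
    ∫⁻ y, lplusCorrectionMajorant q g y ≤ ∫⁻ z, g z := by
  rcases hq.eq_or_lt with rfl | hq
  · simp [lplusCorrectionMajorant]
  set S : Set (ℝ × ℝ) := {p | p.1 < p.2 ∧ p.2 ≤ -p.1}
  have hS : MeasurableSet S :=
    (measurableSet_lt measurable_fst measurable_snd).inter
      (measurableSet_le measurable_snd measurable_fst.neg)
  set K : ℝ × ℝ → ℝ≥0∞ := S.indicator fun p =>
    ENNReal.ofReal (q * Real.exp (q * p.1)) * (ENNReal.ofReal (Real.exp (q * |p.2|)) * g p.2)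
  have hK : AEMeasurable K := by
    refine AEMeasurable.indicator ?_ hS
    fun_prop
  have hslice : ∀ y, lplusCorrectionMajorant q g y = ∫⁻ z, K (y, z) := by
    intro y
    rw [lplusCorrectionMajorant, ← lintegral_const_mul' _ _ ENNReal.ofReal_ne_top,
      ← lintegral_indicator measurableSet_Ioc]
    refine lintegral_congr fun z => ?_
    simp only [K, S, indicator_apply, mem_Ioc, mem_ofPred_eq]
  have hfiber : ∀ z, ∫⁻ y, K (y, z) ≤ g z := by
    intro z
    have hsub : ∀ y, (y, z) ∈ S → y ∈ Iic (-|z|) := fun y ⟨hyz, hzy⟩ =>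
      le_neg.mpr (abs_le.mpr ⟨by linarith, hzy⟩)
    calc ∫⁻ y, K (y, z)
        ≤ ∫⁻ y, (Iic (-|z|)).indicator (fun y => ENNReal.ofReal (q * Real.exp (q * y))) y *
            (ENNReal.ofReal (Real.exp (q * |z|)) * g z) := by
          refine lintegral_mono fun y => ?_
          by_cases hy : (y, z) ∈ S
          · simp only [K, indicator_of_mem hy, indicator_of_mem (hsub y hy), le_refl]
          · simp only [K, indicator_of_notMem hy, zero_le]
      _ = ENNReal.ofReal (Real.exp (-(q * |z|))) *
            (ENNReal.ofReal (Real.exp (q * |z|)) * g z) := by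
          rw [lintegral_mul_const _ ((by fun_prop : Measurable _).indicator measurableSet_Iic),
            lintegral_indicator measurableSet_Iic, lintegral_ofReal_mul_exp_mul_Iic hq, mul_neg]
      _ = g z := by
          rw [← mul_assoc, ← ENNReal.ofReal_mul (Real.exp_pos _).le, ← Real.exp_add,
            neg_add_cancel, Real.exp_zero, ENNReal.ofReal_one, one_mul]
  calc ∫⁻ y, lplusCorrectionMajorant q g y = ∫⁻ y, ∫⁻ z, K (y, z) := lintegral_congr hslice
    _ = ∫⁻ z, ∫⁻ y, K (y, z) := lintegral_lintegral_swap hK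
    _ ≤ ∫⁻ z, g z := lintegral_mono hfiber

lemma lintegral_enorm_Lplus_le {q : ℝ} (hq : 0 ≤ q) {φ : ℝ → ℂ} (hφ : AEMeasurable φ) :
    ∫⁻ y, ‖Lplus q φ y‖ₑ ≤ 2 * ∫⁻ y, ‖φ y‖ₑ :=
  calc ∫⁻ y, ‖Lplus q φ y‖ₑ
      ≤ ∫⁻ y, (‖φ y‖ₑ + lplusCorrectionMajorant q (fun z => ‖φ z‖ₑ) y) :=
        lintegral_mono (enorm_Lplus_le hq φ)
    _ = (∫⁻ y, ‖φ y‖ₑ) + ∫⁻ y, lplusCorrectionMajorant q (fun z => ‖φ z‖ₑ) y :=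
        lintegral_add_left' hφ.enorm _
    _ ≤ 2 * ∫⁻ y, ‖φ y‖ₑ := by
        rw [two_mul]
        exact add_le_add le_rfl (lintegral_lplusCorrectionMajorant_le hq hφ.enorm)

lemma Lminus_eq_Lplus_comp_neg (q : ℝ) (φ : ℝ → ℂ) (y : ℝ) :
    Lminus q φ y = Lplus q (fun z => φ (-z)) (-y) := by
  have hint : (∫ z in (-y)..y, (Real.exp (q * |z|) : ℂ) * φ (-z))
      = ∫ z in (-y)..y, (Real.exp (q * |z|) : ℂ) * φ z := by
    simpa [abs_neg] using intervalIntegral.integral_comp_neg (a := -y) (b := y)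
      (fun z => (Real.exp (q * |z|) : ℂ) * φ z)
  simp only [Lminus, Lplus, neg_neg, mul_neg, neg_lt_zero, hint]
  rcases lt_trichotomy y 0 with hy | rfl | hy
  · rw [if_neg (not_le.2 hy), if_neg (not_lt.2 hy.le)]
  · simp
  · rw [if_pos hy.le, if_pos hy]

lemma lintegral_enorm_Lminus_le {q : ℝ} (hq : 0 ≤ q) {φ : ℝ → ℂ} (hφ : AEMeasurable φ) :
    ∫⁻ y, ‖Lminus q φ y‖ₑ ≤ 2 * ∫⁻ y, ‖φ y‖ₑ := by
  simp_rw [Lminus_eq_Lplus_comp_neg q φ]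
  rw [lintegral_neg_eq_self fun y => ‖Lplus q (fun z => φ (-z)) y‖ₑ,
    ← lintegral_neg_eq_self fun y => ‖φ y‖ₑ]
  exact lintegral_enorm_Lplus_le hq
    (hφ.comp_quasiMeasurePreserving (Measure.measurePreserving_neg volume).quasiMeasurePreserving)

theorem propagator_dispersive_estimate_general (q t : ℝ) (hq : 0 ≤ q)
    (φ : ℝ → ℂ) (hφ : Integrable φ) (x : ℝ) :
    ‖Uq q t φ x‖ ≤ Real.sqrt (2 / π) * (Real.sqrt t)⁻¹ * ∫ y : ℝ, ‖φ y‖ := by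
  have hprefactor :
      ‖Complex.exp (-(I * π / 4)) / (Real.sqrt (2 * π) : ℂ)‖ = (Real.sqrt (2 * π))⁻¹ := by
    rw [norm_div, show -(I * π / 4) = ((-(π / 4) : ℝ) : ℂ) * I by push_cast; ring,
      Complex.norm_exp_ofReal_mul_I, Complex.norm_real, Real.norm_of_nonneg (sqrt_nonneg _),
      one_div]
  have hL : ∀ L : ℝ → ℂ, ∫⁻ y, ‖L y‖ₑ ≤ 2 * ∫⁻ y, ‖φ y‖ₑ → ∫ y, ‖L y‖ ≤ 2 * ∫ y, ‖φ y‖ :=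
    fun L h => integral_norm_le_of_lintegral_enorm_le zero_le_two hφ (by rwa [ENNReal.ofReal_ofNat])
  unfold Uq
  rw [norm_mul, norm_mul, hprefactor, norm_inv, Complex.norm_real,
    Real.norm_of_nonneg (sqrt_nonneg _), Real.sqrt_two_div_pi_eq]
  calc _ ≤ (√(2 * π))⁻¹ * (√t)⁻¹ * (2 * ∫ y, ‖φ y‖) := by
        gcongr
        split_ifs
        · exact (norm_integral_cexp_phase_mul_le x t _).trans
            (hL _ (lintegral_enorm_Lplus_le hq hφ.aemeasurable))
        · exact (norm_integral_cexp_phase_mul_le x t _).trans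
            (hL _ (lintegral_enorm_Lminus_le hq hφ.aemeasurable))
    _ = _ := by ring

theorem propagator_dispersive_estimate (q t : ℝ) (hq : 0 ≤ q) (ht : 0 < t)
    (φ : ℝ → ℂ) (hφ : Integrable φ) (x : ℝ) :
    ‖Uq q t φ x‖ ≤ Real.sqrt (2 / π) * (Real.sqrt t)⁻¹ * ∫ y : ℝ, ‖φ y‖ :=
  propagator_dispersive_estimate_general q t hq φ hφ x
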